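/- For every b > 0 and every k ∈ (0,1), the function κ^{b,·} : (0,1) → ℝ given by κ^{b,k} = -2(E(k) + √(1-k²)·K(k)) / (π b (1 + √(1-k²))) is differentiable at k, with derivative ∂_k κ^{b,k} = -2·(2(E(k) - K(k)) + k²·K(k)) / (π b k √(1-k²) (1 + √(1-k²))). -/

import Mathlib

/-!
Write `Δ = 1 - k² sin² u`. Differentiating under the integral sign and using `k² sin² u = 1 - Δ`
gives `E' = (E - K) / k` and `K' = (J - K) / k` with `J = ∫₀^{π/2} Δ^{-3/2} du`. Since
`d/du (k² sin u cos u / √Δ) = √Δ - (1 - k²) Δ^{-3/2}` and `sin u cos u` vanishes at `0` and `π/2`,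
`J = E / (1 - k²)`. Finally `κ` is `-2 / (π b)` times `(E + √(1 - k²) K) / (1 + √(1 - k²))`,
so the formula for `∂ₖ κ` is the quotient rule.
-/

open Real

/-- Complete elliptic integral of the first kind. -/
noncomputable def ellK (k : ℝ) : ℝ :=
  ∫ u in (0:ℝ)..(π/2), 1 / Real.sqrt (1 - k^2 * Real.sin u ^ 2)

/-- Complete elliptic integral of the second kind. -/
noncomputable def ellE (k : ℝ) : ℝ :=
  ∫ u in (0:ℝ)..(π/2), Real.sqrt (1 - k^2 * Real.sin u ^ 2)

/-- The constant mean curvature of the unduloid with size parameter `b` and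
shape parameter `k`. -/
noncomputable def kappa (b k : ℝ) : ℝ :=
  -2 * (ellE k + Real.sqrt (1 - k^2) * ellK k) / (π * b * (1 + Real.sqrt (1 - k^2)))

open Set intervalIntegral

theorem hasDerivAt_sqrt_one_sub {t : ℝ} (ht : t < 1) :
    HasDerivAt (fun t => √(1 - t)) (-1 / (2 * √(1 - t))) t :=
  ((hasDerivAt_sqrt (sub_pos.2 ht).ne').comp t ((hasDerivAt_id t).const_sub 1)).congr_deriv
    (by ring)

theorem hasDerivAt_one_div_sqrt_one_sub {t : ℝ} (ht : t < 1) :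
    HasDerivAt (fun t => 1 / √(1 - t)) (1 / (2 * √(1 - t) ^ 3)) t := by
  simp only [one_div]
  refine ((hasDerivAt_sqrt_one_sub ht).inv (sqrt_pos.2 (sub_pos.2 ht)).ne').congr_deriv ?_
  field_simp

theorem hasDerivAt_intervalIntegral_comp_sq_mul {φ φ' g : ℝ → ℝ} {a b k : ℝ}
    (hφ : ∀ t < 1, HasDerivAt φ (φ' t) t) (hφ' : ContinuousOn φ' (Iio 1))
    (hg : Continuous g) (hg1 : ∀ u, |g u| ≤ 1) (hk : |k| < 1) :
    HasDerivAt (fun x => ∫ u in a..b, φ (x ^ 2 * g u))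
      (∫ u in a..b, φ' (k ^ 2 * g u) * (2 * k * g u)) k := by
  obtain ⟨m, hkm, hm1⟩ := exists_between hk
  have hball : ∀ x ∈ Metric.ball k (m - |k|), |x| < m := fun x hx => by
    have := abs_sub_abs_le_abs_sub x k
    rw [Metric.mem_ball, dist_eq] at hx
    linarith
  have hbound : ∀ x, |x| ≤ m → ∀ u, x ^ 2 * g u ∈ Icc (-m ^ 2) (m ^ 2) := fun x hx u => by
    rw [mem_Icc, ← abs_le, abs_mul, abs_pow]
    calc |x| ^ 2 * |g u| ≤ m ^ 2 * 1 := by gcongr; exact hg1 u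
      _ = m ^ 2 := mul_one _
  have hIcc : Icc (-m ^ 2) (m ^ 2) ⊆ Iio 1 := fun t ht =>
    ht.2.trans_lt (by nlinarith [abs_nonneg k])
  have hlt : ∀ x, |x| < m → ∀ u, x ^ 2 * g u < 1 := fun x hx u => hIcc (hbound x hx.le u)
  have hFc : ∀ x, |x| < m → Continuous fun u => φ (x ^ 2 * g u) := fun x hx =>
    ContinuousOn.comp_continuous (fun t ht => (hφ t ht).continuousAt.continuousWithinAt)
      (by fun_prop) (hlt x hx)
  obtain ⟨C, hC⟩ := isCompact_Icc.exists_bound_of_continuousOn (hφ'.mono hIcc)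
  have hs := Metric.ball_mem_nhds k (sub_pos.2 hkm)
  refine (hasDerivAt_integral_of_dominated_loc_of_deriv_le (F := fun x u => φ (x ^ 2 * g u))
    (F' := fun x u => φ' (x ^ 2 * g u) * (2 * x * g u)) (a := a) (b := b)
    (μ := MeasureTheory.volume) (bound := fun _ => C * 2) hs ?_
    ((hFc k hkm).intervalIntegrable _ _) ?_ ?_ intervalIntegrable_const ?_).2
  · filter_upwards [hs] with x hx
    exact (hFc x (hball x hx)).aestronglyMeasurable
  · exact ((hφ'.comp_continuous (by fun_prop) (hlt k hkm)).mul (by fun_prop)).aestronglyMeasurable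
  · refine Filter.Eventually.of_forall fun u _ x hx => ?_
    have hx := hball x hx
    rw [norm_mul]
    gcongr
    · exact (norm_nonneg _).trans (hC 0 (by simp [sq_nonneg]))
    · exact hC _ (hbound x hx.le u)
    · rw [Real.norm_eq_abs, abs_mul, abs_mul, abs_two]
      nlinarith [hg1 u, abs_nonneg x, abs_nonneg (g u)]
  · refine Filter.Eventually.of_forall fun u _ x hx => ?_
    exact (hφ _ (hlt x (hball x hx) u)).comp x
      (((hasDerivAt_pow 2 x).mul_const (g u)).congr_deriv (by norm_num))

theorem abs_sin_sq_le_one (u : ℝ) : |sin u ^ 2| ≤ 1 := by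
  rw [abs_of_nonneg (sq_nonneg _)]
  exact sin_sq_le_one u

theorem one_sub_sq_mul_sin_sq_pos {k : ℝ} (hk : |k| < 1) (u : ℝ) :
    0 < 1 - k ^ 2 * sin u ^ 2 := by
  have : k ^ 2 < 1 := (sq_lt_one_iff_abs_lt_one k).2 hk
  nlinarith [sin_sq_le_one u, sq_nonneg k]

theorem continuous_sqrt_one_sub_sq_mul_sin_sq (k : ℝ) :
    Continuous fun u => √(1 - k ^ 2 * sin u ^ 2) := by
  fun_prop

theorem continuous_one_div_sqrt_one_sub_sq_mul_sin_sq_pow {k : ℝ} (hk : |k| < 1) (n : ℕ) :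
    Continuous fun u => 1 / √(1 - k ^ 2 * sin u ^ 2) ^ n :=
  continuous_const.div (by fun_prop) fun u =>
    pow_ne_zero _ (sqrt_pos.2 (one_sub_sq_mul_sin_sq_pos hk u)).ne'

theorem continuous_one_div_sqrt_one_sub_sq_mul_sin_sq {k : ℝ} (hk : |k| < 1) :
    Continuous fun u => 1 / √(1 - k ^ 2 * sin u ^ 2) := by
  simpa using continuous_one_div_sqrt_one_sub_sq_mul_sin_sq_pow hk 1

theorem hasDerivAt_ellE {k : ℝ} (hk0 : k ≠ 0) (hk : |k| < 1) :
    HasDerivAt ellE ((ellE k - ellK k) / k) k := by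
  have h := hasDerivAt_intervalIntegral_comp_sq_mul (g := fun u => sin u ^ 2) (a := 0)
    (b := π / 2) (fun t ht => hasDerivAt_sqrt_one_sub ht)
    (continuousOn_const.div (by fun_prop) fun t ht => by
      have := sqrt_pos.2 (sub_pos.2 (mem_Iio.1 ht)); positivity)
    (by fun_prop) abs_sin_sq_le_one hk
  refine h.congr_deriv (Eq.symm ?_)
  rw [ellE, ellK, ← integral_sub ((continuous_sqrt_one_sub_sq_mul_sin_sq k).intervalIntegrable _ _)
    ((continuous_one_div_sqrt_one_sub_sq_mul_sin_sq hk).intervalIntegrable _ _), ← integral_div]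
  refine integral_congr fun u _ => ?_
  have hΔ := one_sub_sq_mul_sin_sq_pos hk u
  have hr := sqrt_pos.2 hΔ
  field_simp
  linear_combination sq_sqrt hΔ.le

theorem hasDerivAt_sq_mul_sin_mul_cos_div_sqrt {k : ℝ} (hk : |k| < 1) (u : ℝ) :
    HasDerivAt (fun u => k ^ 2 * sin u * cos u / √(1 - k ^ 2 * sin u ^ 2))
      (√(1 - k ^ 2 * sin u ^ 2) - (1 - k ^ 2) * (1 / √(1 - k ^ 2 * sin u ^ 2) ^ 3)) u := by
  have hΔ := one_sub_sq_mul_sin_sq_pos hk u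
  have hr := sqrt_pos.2 hΔ
  have hden := (hasDerivAt_sqrt_one_sub (sub_pos.1 hΔ)).comp u
    (((hasDerivAt_sin u).pow 2).const_mul (k ^ 2))
  refine ((((hasDerivAt_sin u).const_mul (k ^ 2)).mul (hasDerivAt_cos u)).div hden
    hr.ne').congr_deriv ?_
  simp only [Function.comp_apply, Pi.mul_apply, Pi.pow_apply, Nat.cast_ofNat,
    Nat.add_one_sub_one, pow_one]
  field_simp
  linear_combination (k ^ 2 * (cos u ^ 2 - sin u ^ 2) - (√(1 - k ^ 2 * sin u ^ 2) ^ 2 +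
    (1 - k ^ 2 * sin u ^ 2))) * sq_sqrt hΔ.le + k ^ 2 * sin_sq_add_cos_sq u

theorem integral_one_div_sqrt_one_sub_sq_mul_sin_sq_pow_three {k : ℝ} (hk : |k| < 1) :
    ∫ u in (0 : ℝ)..π / 2, 1 / √(1 - k ^ 2 * sin u ^ 2) ^ 3 = ellE k / (1 - k ^ 2) := by
  have hk2 : 0 < 1 - k ^ 2 := sub_pos.2 ((sq_lt_one_iff_abs_lt_one k).2 hk)
  have hcube := continuous_one_div_sqrt_one_sub_sq_mul_sin_sq_pow hk 3
  have hFTC := integral_eq_sub_of_hasDerivAt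
    (fun u _ => hasDerivAt_sq_mul_sin_mul_cos_div_sqrt hk u)
    (((continuous_sqrt_one_sub_sq_mul_sin_sq k).sub
      (continuous_const.mul hcube)).intervalIntegrable 0 (π / 2))
  rw [integral_sub ((continuous_sqrt_one_sub_sq_mul_sin_sq k).intervalIntegrable _ _)
    ((hcube.intervalIntegrable _ _).const_mul (1 - k ^ 2)), integral_const_mul] at hFTC
  simp only [cos_pi_div_two, sin_zero, mul_zero, zero_mul, zero_div, sub_zero] at hFTC
  rw [eq_div_iff hk2.ne', ellE]
  linarith

theorem hasDerivAt_ellK {k : ℝ} (hk0 : k ≠ 0) (hk : |k| < 1) :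
    HasDerivAt ellK ((ellE k / (1 - k ^ 2) - ellK k) / k) k := by
  have h := hasDerivAt_intervalIntegral_comp_sq_mul (g := fun u => sin u ^ 2) (a := 0)
    (b := π / 2) (fun t ht => hasDerivAt_one_div_sqrt_one_sub ht)
    (continuousOn_const.div (by fun_prop) fun t ht => by
      have := sqrt_pos.2 (sub_pos.2 (mem_Iio.1 ht)); positivity)
    (by fun_prop) abs_sin_sq_le_one hk
  refine h.congr_deriv (Eq.symm ?_)
  rw [← integral_one_div_sqrt_one_sub_sq_mul_sin_sq_pow_three hk, ellK, ← integral_sub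
    ((continuous_one_div_sqrt_one_sub_sq_mul_sin_sq_pow hk 3).intervalIntegrable _ _)
    ((continuous_one_div_sqrt_one_sub_sq_mul_sin_sq hk).intervalIntegrable _ _), ← integral_div]
  refine integral_congr fun u _ => ?_
  have hΔ := one_sub_sq_mul_sin_sq_pos hk u
  have hr := sqrt_pos.2 hΔ
  field_simp
  linear_combination -sq_sqrt hΔ.le

theorem stmt_1_general (b k : ℝ) (hk : k ∈ Set.Ioo (0:ℝ) 1) :
    HasDerivAt (fun k => kappa b k)
      (-2 * (2 * (ellE k - ellK k) + k^2 * ellK k) /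
        (π * b * k * Real.sqrt (1 - k^2) * (1 + Real.sqrt (1 - k^2)))) k := by
  obtain ⟨hk0, hk1⟩ := hk
  have hk : |k| < 1 := by rwa [abs_of_pos hk0]
  have hk2 : k ^ 2 < 1 := (sq_lt_one_iff_abs_lt_one k).2 hk
  have hs0 : 0 < √(1 - k ^ 2) := sqrt_pos.2 (sub_pos.2 hk2)
  have hs := (hasDerivAt_sqrt_one_sub hk2).comp (h := fun x => x ^ 2) k (hasDerivAt_pow 2 k)
  have hf := ((hasDerivAt_ellE hk0.ne' hk).add (hs.mul (hasDerivAt_ellK hk0.ne' hk))).div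
    (hs.const_add 1) (by positivity)
  refine (hf.const_mul (-2 / (π * b))).congr_of_eventuallyEq ?_ |>.congr_deriv ?_
  · exact Filter.Eventually.of_forall fun x => mul_div_mul_comm _ _ _ _
  · rw [show π * b * k * √(1 - k ^ 2) * (1 + √(1 - k ^ 2)) =
      (π * b) * (k * √(1 - k ^ 2) * (1 + √(1 - k ^ 2))) by ring, mul_div_mul_comm]
    congr 1
    have hq : 1 - k ^ 2 ≠ 0 := (sub_pos.2 hk2).ne'
    simp only [Function.comp_apply, Pi.add_apply, Pi.mul_apply, Nat.cast_ofNat,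
      Nat.add_one_sub_one, pow_one]
    field_simp
    linear_combination (ellE k * (√(1 - k ^ 2) + 2 - k ^ 2) +
      ellK k * (k ^ 2 - 1) * (√(1 - k ^ 2) + 2)) * sq_sqrt (sub_pos.2 hk2).le

theorem stmt_1 (b k : ℝ) (hb : 0 < b) (hk : k ∈ Set.Ioo (0:ℝ) 1) :
    HasDerivAt (fun k => kappa b k)
      (-2 * (2 * (ellE k - ellK k) + k^2 * ellK k) /
        (π * b * k * Real.sqrt (1 - k^2) * (1 + Real.sqrt (1 - k^2)))) k :=
  stmt_1_general b k hk
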